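/- Let q ∈ (1,∞) and κ ≥ 0. For every δ > 0 there is a constant C_δ ≥ 1, depending only on δ and q, such that for all P, Q ∈ ℝ^{N×n} and all t ≥ 0: ρ_{|P|}(t) ≤ C_δ ρ_{|Q|}(t) + δ ρ_{|P|}(|P − Q|), and (ρ_{|P|})*(t) ≤ C_δ (ρ_{|Q|})*(t) + δ ρ_{|P|}(|P − Q|). (|P| denotes the Frobenius norm.) -/

import Mathlib

/-- The shifted `N`-function `ρ_a(t) = ∫₀ᵗ (κ+a+τ)^{q−2} τ dτ` associated with
`ρ(t) = ∫₀ᵗ (κ+s)^{q−2} s ds`. -/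
noncomputable def rhoShift (κ q a t : ℝ) : ℝ :=
  ∫ τ in (0:ℝ)..t, (κ + a + τ) ^ (q - 2) * τ

/-- The convex conjugate `(ρ_a)*(t) = sup_{s ≥ 0} (s t − ρ_a(s))`. -/
noncomputable def rhoShiftConj (κ q a t : ℝ) : ℝ :=
  sSup {v : ℝ | ∃ s : ℝ, 0 ≤ s ∧ v = s * t - rhoShift κ q a s}

/-!
With `φ_c(t) = (c + t)^(q-2) t²`, the N-function `ρ_c(t) = ∫₀ᵗ (c + τ)^(q-2) τ dτ` satisfies
`φ_c / max q 2 ≤ ρ_c ≤ φ_c`, so shifts `x, y` with `|x - y| ≤ d` may be compared through `φ`.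
If `t ≤ θ d`, then `φ_x(t) ≤ θ φ_x(d)`, because `φ_x(μ s) ≥ μ^(min q 2) φ_x(s)` for `μ ≥ 1`.
If `t > θ d`, then `x + t` and `y + t` agree up to the factor `1 + θ⁻¹`, whence
`φ_x(t) ≤ (1 + θ⁻¹)^|q-2| φ_y(t)`.

For the conjugates, a bound `ρ_y ≤ A ρ_x + K` turns into `ρ_x* ≤ μ ρ_y* + K` as soon as
`ρ_y(μ w) ≥ A μ ρ_y(w)`; such a `μ` exists, independently of the shift, because `ρ_y` grows at
least like the power `min q 2 > 1`.
-/

open MeasureTheory Set Filter intervalIntegral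

namespace ShiftChange

-- `sSup (conjSet f t)` is the conjugate `sup_{s ≥ 0} (s t - f s)` only when the set is bounded
-- above; otherwise it is `0`.
def conjSet (f : ℝ → ℝ) (t : ℝ) : Set ℝ := {v | ∃ s, 0 ≤ s ∧ v = s * t - f s}

section Conjugate

variable {f g : ℝ → ℝ} {t : ℝ}

lemma bddAbove_conjSet (hf : ∀ s, 0 ≤ s → 0 ≤ f s) (ht : 0 ≤ t)
    (hgrowth : ∀ᶠ s in atTop, s * t ≤ f s) : BddAbove (conjSet f t) := by
  obtain ⟨S, hS⟩ := eventually_atTop.1 hgrowth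
  refine ⟨max S 0 * t, ?_⟩
  rintro _ ⟨s, hs, rfl⟩
  rcases le_total S s with hSs | hsS
  · nlinarith [hS s hSs, le_max_right S 0]
  · nlinarith [hf s hs, le_max_left S 0]

lemma sSup_conjSet_nonneg (hf : f 0 = 0) (hbdd : BddAbove (conjSet f t)) :
    0 ≤ sSup (conjSet f t) :=
  le_csSup hbdd ⟨0, le_rfl, by simp [hf]⟩

lemma sSup_conjSet_le {A K μ : ℝ} (hA : 1 ≤ A) (hK : 0 ≤ K) (hμ : 0 < μ)
    (hg : BddAbove (conjSet g t)) (hgf : ∀ s, 0 ≤ s → g s ≤ A * f s + K)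
    (hscale : ∀ w, 0 ≤ w → A * μ * g w ≤ g (μ * w)) :
    sSup (conjSet f t) ≤ μ * sSup (conjSet g t) + K := by
  refine csSup_le ⟨_, 0, le_rfl, rfl⟩ ?_
  rintro _ ⟨s, hs, rfl⟩
  obtain ⟨w, hw, rfl⟩ : ∃ w, 0 ≤ w ∧ s = μ * w := ⟨s / μ, by positivity, by field_simp⟩
  have hsup : w * t - g w ≤ sSup (conjSet g t) := le_csSup hg ⟨w, hw, rfl⟩
  have hfw : μ * g w - K ≤ f (μ * w) := by
    nlinarith [hgf (μ * w) hs, hscale w hw]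
  nlinarith

end Conjugate

-- `rhoShift κ q a` is `rho q (κ + a)` by definition.
noncomputable def rho (q c t : ℝ) : ℝ := ∫ τ in (0:ℝ)..t, (c + τ) ^ (q - 2) * τ

noncomputable def phi (q c t : ℝ) : ℝ := (c + t) ^ (q - 2) * t ^ 2

section Comparison

variable {q c t : ℝ}

lemma intervalIntegrable_rho (hq : 1 < q) (hc : 0 ≤ c) (ht : 0 ≤ t) :
    IntervalIntegrable (fun τ => (c + τ) ^ (q - 2) * τ) volume 0 t := by
  rcases hc.eq_or_lt with rfl | hc
  · refine (intervalIntegrable_rpow' (r := q - 1) (by linarith)).congr fun τ hτ => ?_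
    rw [uIoc_of_le ht] at hτ
    simp only [zero_add]
    rw [← Real.rpow_add_one hτ.1.ne']
    ring_nf
  · refine (ContinuousOn.mul ?_ continuousOn_id).intervalIntegrable
    refine ContinuousOn.rpow_const (by fun_prop) fun τ hτ => Or.inl ?_
    rw [uIcc_of_le ht] at hτ
    linarith [hτ.1]

lemma rho_nonneg (hc : 0 ≤ c) (ht : 0 ≤ t) : 0 ≤ rho q c t :=
  integral_nonneg ht fun τ hτ => mul_nonneg (Real.rpow_nonneg (by linarith [hτ.1]) _) hτ.1

lemma phi_nonneg (hc : 0 ≤ c) (ht : 0 ≤ t) : 0 ≤ phi q c t :=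
  mul_nonneg (Real.rpow_nonneg (by linarith) _) (sq_nonneg t)

lemma integral_const_mul_id_eq_phi :
    ∫ τ in (0:ℝ)..t, (c + t) ^ (q - 2) * τ = phi q c t / 2 := by
  rw [intervalIntegral.integral_const_mul, integral_id, phi]
  ring

lemma integral_const_mul_rpow_eq_phi (hq : 1 < q) (ht : 0 < t) :
    ∫ τ in (0:ℝ)..t, (c + t) ^ (q - 2) * t ^ (2 - q) * τ ^ (q - 1) = phi q c t / q := by
  have htt : t ^ (2 - q) * t ^ q = t ^ 2 := by
    rw [← Real.rpow_add ht, ← Real.rpow_natCast]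
    norm_num
  rw [intervalIntegral.integral_const_mul, integral_rpow (Or.inl (by linarith)),
    Real.zero_rpow (by linarith), phi, ← htt]
  ring_nf

-- The second model integrand is that of `rho` with `c + τ` replaced by `τ / t * (c + t) ≤ c + τ`.
lemma const_mul_rpow_eq {τ : ℝ} (hc : 0 ≤ c) (ht : 0 < t) (hτ : 0 < τ) :
    (c + t) ^ (q - 2) * t ^ (2 - q) * τ ^ (q - 1) = (τ / t * (c + t)) ^ (q - 2) * τ := by
  rw [Real.mul_rpow (by positivity) (by linarith), Real.div_rpow hτ.le ht.le,
    show 2 - q = -(q - 2) by ring, Real.rpow_neg ht.le, show q - 1 = q - 2 + 1 by ring,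
    Real.rpow_add_one hτ.ne']
  field_simp

lemma div_mul_add_le_add {τ : ℝ} (hc : 0 ≤ c) (ht : 0 < t) (hτt : τ ≤ t) :
    τ / t * (c + t) ≤ c + τ := by
  rw [div_mul_eq_mul_div, div_le_iff₀ ht]
  nlinarith

lemma rho_bounds_of_two_le (hq : 2 ≤ q) (hc : 0 ≤ c) (ht : 0 < t) :
    phi q c t / q ≤ rho q c t ∧ rho q c t ≤ phi q c t / 2 := by
  have hint := intervalIntegrable_rho (q := q) (by linarith) hc ht.le
  constructor
  · rw [← integral_const_mul_rpow_eq_phi (by linarith) ht]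
    refine integral_mono_on ht.le
      ((intervalIntegrable_rpow' (by linarith)).const_mul _) hint fun τ hτ => ?_
    rcases hτ.1.eq_or_lt with rfl | hτ0
    · simp [Real.zero_rpow (by linarith : q - 1 ≠ 0)]
    rw [const_mul_rpow_eq hc ht hτ0]
    exact mul_le_mul_of_nonneg_right (Real.rpow_le_rpow (by positivity)
      (div_mul_add_le_add hc ht hτ.2) (by linarith)) hτ.1
  · rw [← integral_const_mul_id_eq_phi]
    refine integral_mono_on ht.le hint
      ((continuous_const.mul continuous_id).intervalIntegrable _ _) fun τ hτ =>
      mul_le_mul_of_nonneg_right (Real.rpow_le_rpow (by linarith [hτ.1])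
        (by linarith [hτ.2]) (by linarith)) hτ.1

lemma rho_bounds_of_le_two (hq : 1 < q) (hq2 : q ≤ 2) (hc : 0 ≤ c) (ht : 0 < t) :
    phi q c t / 2 ≤ rho q c t ∧ rho q c t ≤ phi q c t / q := by
  have hint := intervalIntegrable_rho hq hc ht.le
  constructor
  · rw [← integral_const_mul_id_eq_phi]
    refine integral_mono_on ht.le
      ((continuous_const.mul continuous_id).intervalIntegrable _ _) hint fun τ hτ => ?_
    rcases hτ.1.eq_or_lt with rfl | hτ0
    · simp
    exact mul_le_mul_of_nonneg_right (Real.rpow_le_rpow_of_nonpos (by linarith)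
      (by linarith [hτ.2]) (by linarith)) hτ.1
  · rw [← integral_const_mul_rpow_eq_phi hq ht]
    refine integral_mono_on ht.le hint
      ((intervalIntegrable_rpow' (by linarith)).const_mul _) fun τ hτ => ?_
    rcases hτ.1.eq_or_lt with rfl | hτ0
    · simp [Real.zero_rpow (by linarith : q - 1 ≠ 0)]
    rw [const_mul_rpow_eq hc ht hτ0]
    exact mul_le_mul_of_nonneg_right (Real.rpow_le_rpow_of_nonpos (by positivity)
      (div_mul_add_le_add hc ht hτ.2) (by linarith)) hτ.1

lemma rho_le_phi (hq : 1 < q) (hc : 0 ≤ c) (ht : 0 ≤ t) : rho q c t ≤ phi q c t := by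
  rcases ht.eq_or_lt with rfl | ht
  · simp [rho, phi]
  have hφ := phi_nonneg (q := q) hc ht.le
  rcases le_total 2 q with hq2 | hq2
  · linarith [(rho_bounds_of_two_le hq2 hc ht).2]
  · exact (rho_bounds_of_le_two hq hq2 hc ht).2.trans (div_le_self hφ hq.le)

lemma phi_le_rho (hq : 1 < q) (hc : 0 ≤ c) (ht : 0 ≤ t) :
    phi q c t ≤ max q 2 * rho q c t := by
  rcases ht.eq_or_lt with rfl | ht
  · simp [rho, phi]
  rcases le_total 2 q with hq2 | hq2
  · have h := (div_le_iff₀' (by linarith)).1 (rho_bounds_of_two_le hq2 hc ht).1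
    rwa [max_eq_left hq2]
  · have h := (div_le_iff₀' two_pos).1 (rho_bounds_of_le_two hq hq2 hc ht).1
    rwa [max_eq_right hq2]

end Comparison

section Phi

variable {q c : ℝ}

lemma rpow_le_of_le_mul_of_le_mul {L u v : ℝ} (p : ℝ) (hL : 1 ≤ L) (hu : 0 < u) (hv : 0 < v)
    (huv : u ≤ L * v) (hvu : v ≤ L * u) : u ^ p ≤ L ^ |p| * v ^ p := by
  have hL0 : 0 < L := by linarith
  rcases le_total 0 p with hp | hp
  · rw [abs_of_nonneg hp, ← Real.mul_rpow hL0.le hv.le]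
    exact Real.rpow_le_rpow hu.le huv hp
  · have h := Real.rpow_le_rpow_of_nonpos hv hvu hp
    rw [Real.mul_rpow hL0.le hu.le] at h
    calc u ^ p = L ^ (-p) * (L ^ p * u ^ p) := by
          rw [← mul_assoc, ← Real.rpow_add hL0, neg_add_cancel, Real.rpow_zero, one_mul]
      _ ≤ L ^ |p| * v ^ p := by
          rw [abs_of_nonpos hp]
          exact mul_le_mul_of_nonneg_left h (by positivity)

lemma phi_le_of_abs_sub_le {x y K t : ℝ} (hK : 0 ≤ K) (hx : 0 ≤ x) (hy : 0 ≤ y) (ht : 0 ≤ t)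
    (hxy : |x - y| ≤ K * t) : phi q x t ≤ (1 + K) ^ |q - 2| * phi q y t := by
  rcases ht.eq_or_lt with rfl | ht
  · simp [phi]
  obtain ⟨hxy₁, hxy₂⟩ := abs_le.1 hxy
  have hcomp := rpow_le_of_le_mul_of_le_mul (q - 2) (le_add_of_nonneg_right hK)
    (by positivity : 0 < x + t) (by positivity : 0 < y + t) (by nlinarith) (by nlinarith)
  unfold phi
  calc (x + t) ^ (q - 2) * t ^ 2 ≤ (1 + K) ^ |q - 2| * (y + t) ^ (q - 2) * t ^ 2 := by gcongr
    _ = _ := by ring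

lemma rpow_mul_le_rpow_add_mul {μ w : ℝ} (hc : 0 ≤ c) (hw : 0 < w) (hμ : 1 ≤ μ) :
    μ ^ min q 2 * (c + w) ^ (q - 2) ≤ μ ^ (2 : ℝ) * (c + μ * w) ^ (q - 2) := by
  have hμ0 : 0 < μ := by linarith
  rcases le_total 2 q with hq2 | hq2
  · rw [min_eq_right hq2]
    gcongr
    nlinarith
  · rw [min_eq_left hq2, show μ ^ q = μ ^ (2 : ℝ) * μ ^ (q - 2) by
      rw [← Real.rpow_add hμ0]; ring_nf, mul_assoc, ← Real.mul_rpow hμ0.le (by linarith)]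
    exact mul_le_mul_of_nonneg_left
      (Real.rpow_le_rpow_of_nonpos (by positivity) (by nlinarith) (by linarith)) (by positivity)

lemma phi_scale {μ w : ℝ} (hc : 0 ≤ c) (hw : 0 ≤ w) (hμ : 1 ≤ μ) :
    μ ^ min q 2 * phi q c w ≤ phi q c (μ * w) := by
  rcases hw.eq_or_lt with rfl | hw
  · simp [phi]
  have h := mul_le_mul_of_nonneg_right (rpow_mul_le_rpow_add_mul (q := q) hc hw hμ) (sq_nonneg w)
  unfold phi
  rw [mul_pow, ← Real.rpow_natCast μ 2]
  push_cast
  linarith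

lemma phi_le_mul_phi {x θ d t : ℝ} (hq : 1 < q) (hx : 0 ≤ x) (hθ : 0 < θ) (hθ1 : θ ≤ 1)
    (ht : 0 ≤ t) (htd : t ≤ θ * d) : phi q x t ≤ θ * phi q x d := by
  have hd : 0 ≤ d := by nlinarith
  rcases ht.eq_or_lt with rfl | ht
  · rw [phi, zero_pow two_ne_zero, mul_zero]
    exact mul_nonneg hθ.le (phi_nonneg hx hd)
  have hθμ : θ⁻¹ ≤ d / t := by
    rw [inv_le_iff_one_le_mul₀ hθ, div_mul_eq_mul_div, le_div_iff₀ ht]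
    linarith
  have hμ : 1 ≤ d / t := (one_le_inv₀ hθ).2 hθ1 |>.trans hθμ
  have hscale := phi_scale (q := q) hx ht.le hμ
  rw [div_mul_cancel₀ d ht.ne'] at hscale
  have hμm : d / t ≤ (d / t) ^ min q 2 := by
    simpa using Real.rpow_le_rpow_of_exponent_le hμ (le_min hq.le one_le_two)
  have hφ := phi_nonneg (q := q) hx ht.le
  calc phi q x t = θ * (θ⁻¹ * phi q x t) := by field_simp
    _ ≤ θ * ((d / t) ^ min q 2 * phi q x t) := by gcongr; exact hθμ.trans hμm
    _ ≤ θ * phi q x d := by gcongr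

lemma phi_shift {x y d θ t : ℝ} (hq : 1 < q) (hx : 0 ≤ x) (hy : 0 ≤ y) (hθ : 0 < θ)
    (hθ1 : θ ≤ 1) (ht : 0 ≤ t) (hxy : |x - y| ≤ d) :
    phi q x t ≤ (1 + θ⁻¹) ^ |q - 2| * phi q y t + θ * phi q x d := by
  have hd : 0 ≤ d := (abs_nonneg _).trans hxy
  have hxd : 0 ≤ θ * phi q x d := mul_nonneg hθ.le (phi_nonneg hx hd)
  have hyt : 0 ≤ (1 + θ⁻¹) ^ |q - 2| * phi q y t := mul_nonneg (by positivity) (phi_nonneg hy ht)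
  rcases le_total t (θ * d) with htd | htd
  · linarith [phi_le_mul_phi hq hx hθ hθ1 ht htd]
  · have hK : |x - y| ≤ θ⁻¹ * t := hxy.trans (by rw [inv_mul_eq_div, le_div_iff₀ hθ]; linarith)
    linarith [phi_le_of_abs_sub_le (q := q) (inv_nonneg.2 hθ.le) hx hy ht hK]

end Phi

section Rho

variable {q c : ℝ}

lemma rho_scale {μ w : ℝ} (hq : 1 < q) (hc : 0 ≤ c) (hw : 0 ≤ w) (hμ : 1 ≤ μ) :
    μ ^ min q 2 * rho q c w ≤ max q 2 * rho q c (μ * w) :=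
  calc μ ^ min q 2 * rho q c w ≤ μ ^ min q 2 * phi q c w := by
        gcongr
        exact rho_le_phi hq hc hw
    _ ≤ phi q c (μ * w) := phi_scale hc hw hμ
    _ ≤ max q 2 * rho q c (μ * w) := phi_le_rho hq hc (by positivity)

lemma exists_mul_rho_le (hq : 1 < q) (A : ℝ) :
    ∃ μ, 1 ≤ μ ∧ ∀ c w, 0 ≤ c → 0 ≤ w → A * μ * rho q c w ≤ rho q c (μ * w) := by
  obtain ⟨μ, hμA, hμ1⟩ := (((tendsto_rpow_atTop (by linarith [lt_min hq one_lt_two] :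
    0 < min q 2 - 1)).eventually_ge_atTop (A * max q 2)).and (eventually_ge_atTop 1)).exists
  refine ⟨μ, hμ1, fun c w hc hw => ?_⟩
  have hM : 0 < max q 2 := by positivity
  have hμμ : μ ^ (min q 2 - 1) * μ = μ ^ min q 2 := by
    rw [← Real.rpow_add_one (by positivity)]
    ring_nf
  have hR := rho_nonneg (q := q) hc hw
  have := rho_scale hq hc hw hμ1
  refine le_of_mul_le_mul_right ?_ hM
  nlinarith [mul_le_mul_of_nonneg_right hμA (by positivity : 0 ≤ μ * rho q c w)]

lemma bddAbove_conjSet_rho {t : ℝ} (hq : 1 < q) (hc : 0 ≤ c) (ht : 0 ≤ t) :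
    BddAbove (conjSet (rho q c) t) := by
  refine bddAbove_conjSet (fun s hs => rho_nonneg hc hs) ht ?_
  have hR1 : 0 < rho q c 1 := by
    have hφ : 0 < phi q c 1 := by simp only [phi]; positivity
    have := phi_le_rho hq hc zero_le_one
    nlinarith [le_max_right q 2]
  filter_upwards [(tendsto_rpow_atTop (by linarith [lt_min hq one_lt_two] :
    0 < min q 2 - 1)).eventually_ge_atTop (t * max q 2 / rho q c 1), eventually_ge_atTop 1]
    with s hs hs1
  have hscale := rho_scale hq hc zero_le_one hs1
  rw [mul_one] at hscale
  have hss : s ^ (min q 2 - 1) * s = s ^ min q 2 := by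
    rw [← Real.rpow_add_one (by positivity)]
    ring_nf
  rw [div_le_iff₀ hR1] at hs
  have hM : 0 < max q 2 := by positivity
  refine le_of_mul_le_mul_right ?_ hM
  nlinarith

lemma rho_le_of_abs_sub_le {x y d : ℝ} (hq : 1 < q) (hx : 0 ≤ x) (hy : 0 ≤ y)
    (hxy : |x - y| ≤ d) : rho q y d ≤ 2 ^ |q - 2| * max q 2 * rho q x d := by
  have hd : 0 ≤ d := (abs_nonneg _).trans hxy
  have hyx : |y - x| ≤ 1 * d := by rwa [abs_sub_comm, one_mul]
  calc rho q y d ≤ phi q y d := rho_le_phi hq hy hd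
    _ ≤ (1 + 1) ^ |q - 2| * phi q x d := phi_le_of_abs_sub_le zero_le_one hy hx hd hyx
    _ ≤ 2 ^ |q - 2| * (max q 2 * rho q x d) := by
        rw [one_add_one_eq_two]
        gcongr
        exact phi_le_rho hq hx hd
    _ = 2 ^ |q - 2| * max q 2 * rho q x d := by ring

lemma exists_rho_le_mul_add {δ : ℝ} (hq : 1 < q) (hδ : 0 < δ) :
    ∃ A, 1 ≤ A ∧ ∀ x y d t, 0 ≤ x → 0 ≤ y → 0 ≤ t → |x - y| ≤ d →
      rho q x t ≤ A * rho q y t + δ * rho q x d := by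
  set M := max q 2
  have hM : 1 ≤ M := le_max_of_le_right one_le_two
  set θ := min (δ / M) 1
  have hθ : 0 < θ := lt_min (by positivity) one_pos
  have hθM : θ * M ≤ δ := (le_div_iff₀ (by positivity)).1 (min_le_left _ _)
  have ha : 1 ≤ (1 + θ⁻¹) ^ |q - 2| :=
    Real.one_le_rpow (by linarith [inv_pos.2 hθ]) (abs_nonneg _)
  refine ⟨M * (1 + θ⁻¹) ^ |q - 2|, one_le_mul_of_one_le_of_one_le hM ha,
    fun x y d t hx hy ht hxy => ?_⟩
  have hd : 0 ≤ d := (abs_nonneg _).trans hxy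
  have hRy := rho_nonneg (q := q) hy ht
  have hRx := rho_nonneg (q := q) hx hd
  calc rho q x t ≤ phi q x t := rho_le_phi hq hx ht
    _ ≤ (1 + θ⁻¹) ^ |q - 2| * phi q y t + θ * phi q x d :=
        phi_shift hq hx hy hθ (min_le_right _ _) ht hxy
    _ ≤ (1 + θ⁻¹) ^ |q - 2| * (M * rho q y t) + θ * (M * rho q x d) := by
        gcongr
        · exact phi_le_rho hq hy ht
        · exact phi_le_rho hq hx hd
    _ ≤ M * (1 + θ⁻¹) ^ |q - 2| * rho q y t + δ * rho q x d := by nlinarith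

lemma exists_shift_change {δ : ℝ} (hq : 1 < q) (hδ : 0 < δ) :
    ∃ C, 1 ≤ C ∧ ∀ x y d t, 0 ≤ x → 0 ≤ y → 0 ≤ t → |x - y| ≤ d →
      rho q x t ≤ C * rho q y t + δ * rho q x d ∧
      sSup (conjSet (rho q x) t) ≤ C * sSup (conjSet (rho q y) t) + δ * rho q x d := by
  have hM : 1 ≤ 2 ^ |q - 2| * max q 2 :=
    one_le_mul_of_one_le_of_one_le (Real.one_le_rpow one_le_two (abs_nonneg _))
      (le_max_of_le_right one_le_two)
  -- The error term of the conjugate bound comes shifted at `y`; moving it back to `x` costs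
  -- the factor `2 ^ |q - 2| * max q 2` (see `rho_le_of_abs_sub_le`).
  obtain ⟨A, hA1, hA⟩ := exists_rho_le_mul_add hq (div_pos hδ (by positivity) :
    0 < δ / (2 ^ |q - 2| * max q 2))
  obtain ⟨μ, hμ1, hμ⟩ := exists_mul_rho_le hq A
  refine ⟨max A μ, le_max_of_le_left hA1, fun x y d t hx hy ht hxy => ?_⟩
  have hd : 0 ≤ d := (abs_nonneg _).trans hxy
  have hRx := rho_nonneg (q := q) hx hd
  have hδ' : δ / (2 ^ |q - 2| * max q 2) ≤ δ := div_le_self hδ.le hM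
  have hyx : δ / (2 ^ |q - 2| * max q 2) * rho q y d ≤ δ * rho q x d := by
    rw [div_mul_eq_mul_div, div_le_iff₀ (by positivity)]
    nlinarith [rho_le_of_abs_sub_le hq hx hy hxy]
  constructor
  · calc rho q x t ≤ A * rho q y t + δ / (2 ^ |q - 2| * max q 2) * rho q x d :=
          hA x y d t hx hy ht hxy
      _ ≤ max A μ * rho q y t + δ * rho q x d := by
          gcongr
          · exact rho_nonneg hy ht
          · exact le_max_left _ _
  · calc sSup (conjSet (rho q x) t) ≤ μ * sSup (conjSet (rho q y) t) + δ * rho q x d :=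
          sSup_conjSet_le hA1 (by positivity) (by positivity) (bddAbove_conjSet_rho hq hy ht)
            (fun s hs => (hA y x d s hy hx hs (by rwa [abs_sub_comm])).trans (by linarith))
            (fun w hw => hμ y w hy hw)
      _ ≤ max A μ * sSup (conjSet (rho q y) t) + δ * rho q x d := by
          gcongr
          · exact sSup_conjSet_nonneg (by simp [rho]) (bddAbove_conjSet_rho hq hy ht)
          · exact le_max_right _ _

end Rho

end ShiftChange

open ShiftChange in
theorem stmt14 (N n : ℕ) (q : ℝ) (hq : 1 < q) (δ : ℝ) (hδ : 0 < δ) :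
    ∃ C : ℝ, 1 ≤ C ∧ ∀ κ : ℝ, 0 ≤ κ →
      ∀ P Q : EuclideanSpace ℝ (Fin N × Fin n), ∀ t : ℝ, 0 ≤ t →
        rhoShift κ q ‖P‖ t ≤ C * rhoShift κ q ‖Q‖ t + δ * rhoShift κ q ‖P‖ ‖P - Q‖ ∧
        rhoShiftConj κ q ‖P‖ t ≤
          C * rhoShiftConj κ q ‖Q‖ t + δ * rhoShift κ q ‖P‖ ‖P - Q‖ := by
  obtain ⟨C, hC1, hC⟩ := exists_shift_change hq hδ
  refine ⟨C, hC1, fun κ hκ P Q t ht => ?_⟩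
  have hPQ : |(κ + ‖P‖) - (κ + ‖Q‖)| ≤ ‖P - Q‖ := by
    rw [add_sub_add_left_eq_sub]
    exact abs_norm_sub_norm_le P Q
  exact hC (κ + ‖P‖) (κ + ‖Q‖) ‖P - Q‖ t (by positivity) (by positivity) ht hPQ
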